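/- arXiv:0808.1850 — 3 statements merged into one kernel-verified Lean document; each statement's English description precedes it below -/
import Mathlib

section
/- Let f(x) = (x+a)(x+b)(x+c) with a, b, c > 0, and let F(x) = α_0 + α_1 x + α_2 x^2 + x^3 be defined by α_i = a_i^2 - a_{i-1}a_{i+1} where a_i are coefficients of f. Then α_1 α_2 - α_0 > 0, i.e., F satisfies the Routh–Hurwitz stability criterion for cubics. -/
open Polynomial

theorem stmt_4 (a b c : ℝ) (ha : 0 < a) (hb : 0 < b) (hc : 0 < c)
    (f : Polynomial ℝ) (hf : f = (X + C a) * (X + C b) * (X + C c))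
    (α0 α1 α2 : ℝ)
    (h0 : α0 = f.coeff 0 ^ 2)
    (h1 : α1 = f.coeff 1 ^ 2 - f.coeff 0 * f.coeff 2)
    (h2 : α2 = f.coeff 2 ^ 2 - f.coeff 1 * f.coeff 3) :
    α1 * α2 - α0 > 0 := by
  have hexp : f = C (a*b*c) + C (a*b+a*c+b*c) * X + C (a+b+c) * X^2 + X^3 := by
    rw [hf]; simp only [C_add, C_mul]; ring
  have c0 : f.coeff 0 = a * b * c := by rw [hexp]; simp only [coeff_add, coeff_C_mul, coeff_X_pow, coeff_C, coeff_X_one, coeff_X]; norm_num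
  have c1 : f.coeff 1 = a*b + a*c + b*c := by rw [hexp]; simp only [coeff_add, coeff_C_mul, coeff_X_pow, coeff_C, coeff_X_one, coeff_X]; norm_num
  have c2 : f.coeff 2 = a + b + c := by rw [hexp]; simp only [coeff_add, coeff_C_mul, coeff_X_pow, coeff_C, coeff_X_one, coeff_X]; norm_num
  have c3 : f.coeff 3 = 1 := by rw [hexp]; simp only [coeff_add, coeff_C_mul, coeff_X_pow, coeff_C, coeff_X_one, coeff_X]; norm_num
  simp only [c0, c1, c2, c3] at h0 h1 h2
  subst h0 h1 h2
  nlinarith [mul_pos ha hb, mul_pos hb hc, mul_pos ha hc, mul_pos (mul_pos ha hb) hc, sq_nonneg (a-b), sq_nonneg (b-c), sq_nonneg (a-c), sq_nonneg (a*b-b*c), sq_nonneg (a*b-a*c), sq_nonneg (a*c-b*c), mul_pos (mul_pos ha ha) hb, mul_pos (mul_pos ha ha) hc, mul_pos (mul_pos hb hb) hc, sq_nonneg (a+b+c)]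
end

section
/- The coefficient matrix [[4,0,0,0],[22,64,0,0],[30,164,62,0],[1,24,16,2]] is not totally positive: the determinant of the 3×3 submatrix in the lower left corner, [[22,64,0],[30,164,62],[1,24,16]], equals -1760. -/
/-- A matrix is totally positive if every square minor (taken with strictly increasing
row and column indices) has positive determinant. -/
def Matrix.TotallyPositive {m : ℕ} (M : Matrix (Fin m) (Fin m) ℝ) : Prop :=
  ∀ (k : ℕ) (r : Fin k → Fin m) (c : Fin k → Fin m),
    StrictMono r → StrictMono c → 0 < (M.submatrix r c).det

theorem Matrix.not_totallyPositive_of_det_submatrix_nonpos {m k : ℕ}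
    {M : Matrix (Fin m) (Fin m) ℝ} {r c : Fin k → Fin m} (hr : StrictMono r)
    (hc : StrictMono c) (hdet : (M.submatrix r c).det ≤ 0) : ¬ M.TotallyPositive :=
  fun hM => (hM k r c hr hc).not_ge hdet

theorem stmt_17
    (M : Matrix (Fin 4) (Fin 4) ℝ)
    (hM : M = !![4, 0, 0, 0; 22, 64, 0, 0; 30, 164, 62, 0; 1, 24, 16, 2]) :
    (!![22, 64, 0; 30, 164, 62; 1, 24, 16] : Matrix (Fin 3) (Fin 3) ℝ).det = -1760 ∧
    ¬ M.TotallyPositive := by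
  have hdet : (!![22, 64, 0; 30, 164, 62; 1, 24, 16] : Matrix (Fin 3) (Fin 3) ℝ).det = -1760 := by
    rw [Matrix.det_fin_three]
    simp only [Matrix.of_apply, Matrix.cons_val', Matrix.cons_val_zero, Matrix.cons_val_one,
      Matrix.cons_val, Matrix.cons_val_fin_one]
    norm_num
  have hminor : M.submatrix ![1, 2, 3] ![0, 1, 2] = !![22, 64, 0; 30, 164, 62; 1, 24, 16] := by
    subst hM
    ext i j
    fin_cases i <;> fin_cases j <;> rfl
  refine ⟨hdet, Matrix.not_totallyPositive_of_det_submatrix_nonpos (r := ![1, 2, 3])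
    (c := ![0, 1, 2]) (Fin.strictMono_iff_lt_succ.2 (by decide))
    (Fin.strictMono_iff_lt_succ.2 (by decide)) ?_⟩
  rw [hminor, hdet]
  norm_num
end

section
/- For f(x,y) = Π_{k=1}^{3}(x + b_k y + c_k) with all b_k, c_k > 0, writing f = Σ a_{ij} x^i y^j, the 3×3 determinant det[[a_{02},a_{01},a_{00}],[a_{12},a_{11},a_{10}],[a_{22},a_{21},a_{20}]] is a polynomial in b_1,b_2,b_3,c_1,c_2,c_3 that is a sum of monomials with all positive coefficients; in particular it is positive for all positive values of the parameters. -/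
open Polynomial

/-- For `f = ∏ (x + bₖy + cₖ)` (in `ℝ[x][y]` with `x = C X`, `y = X`) with all
parameters positive, the 3×3 determinant of the coefficient array
`[[a02, a01, a00], [a12, a11, a10], [a22, a21, a20]]` is the explicit sum of 7
monomials with positive coefficients; in particular it is positive. -/
theorem stmt_19 (b₁ b₂ b₃ c₁ c₂ c₃ : ℝ)
    (hb₁ : 0 < b₁) (hb₂ : 0 < b₂) (hb₃ : 0 < b₃)
    (hc₁ : 0 < c₁) (hc₂ : 0 < c₂) (hc₃ : 0 < c₃)
    (f : Polynomial (Polynomial ℝ))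
    (hf : f = (C X + C (C b₁) * X + C (C c₁)) * (C X + C (C b₂) * X + C (C c₂))
        * (C X + C (C b₃) * X + C (C c₃)))
    (a : ℕ → ℕ → ℝ) (ha : ∀ i j, a i j = ((f.coeff j).coeff i)) :
    (!![a 0 2, a 0 1, a 0 0; a 1 2, a 1 1, a 1 0; a 2 2, a 2 1, a 2 0]
        : Matrix (Fin 3) (Fin 3) ℝ).det
      = b₂ * b₃ ^ 2 * c₁ ^ 3 + b₂ ^ 2 * b₃ * c₁ ^ 3 + b₁ * b₃ ^ 2 * c₂ ^ 3
        + b₁ ^ 2 * b₃ * c₂ ^ 3 + b₁ * b₂ ^ 2 * c₃ ^ 3 + b₁ ^ 2 * b₂ * c₃ ^ 3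
        + 3 * b₁ * b₂ * b₃ * c₁ * c₂ * c₃ ∧
    0 < (!![a 0 2, a 0 1, a 0 0; a 1 2, a 1 1, a 1 0; a 2 2, a 2 1, a 2 0]
        : Matrix (Fin 3) (Fin 3) ℝ).det := by
  have hexp : f =
      C (X^3 + C (c₁+c₂+c₃) * X^2 + C (c₁*c₂+c₁*c₃+c₂*c₃) * X + C (c₁*c₂*c₃))
      + C (C (b₁+b₂+b₃) * X^2 + C (b₁*(c₂+c₃)+b₂*(c₁+c₃)+b₃*(c₁+c₂)) * X
          + C (b₁*c₂*c₃+b₂*c₁*c₃+b₃*c₁*c₂)) * X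
      + C (C (b₁*b₂+b₁*b₃+b₂*b₃) * X + C (b₁*b₂*c₃+b₁*b₃*c₂+b₂*b₃*c₁)) * X^2
      + C (C (b₁*b₂*b₃)) * X^3 := by
    rw [hf]
    simp only [map_mul, map_add, map_pow]
    ring
  have key : ∀ i j : ℕ, a i j = ((f.coeff j).coeff i) := ha
  have e00 : a 0 0 = c₁*c₂*c₃ := by
    rw [key, hexp]; simp only [coeff_add, coeff_C_mul, coeff_X_pow, coeff_X, coeff_C, coeff_one,
      mul_ite, mul_one, mul_zero, ite_true, ite_false]
    norm_num
  have e10 : a 1 0 = c₁*c₂+c₁*c₃+c₂*c₃ := by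
    rw [key, hexp]; simp only [coeff_add, coeff_C_mul, coeff_X_pow, coeff_X, coeff_C, coeff_one,
      mul_ite, mul_one, mul_zero, ite_true, ite_false]
    norm_num
  have e20 : a 2 0 = c₁+c₂+c₃ := by
    rw [key, hexp]; simp only [coeff_add, coeff_C_mul, coeff_X_pow, coeff_X, coeff_C, coeff_one,
      mul_ite, mul_one, mul_zero, ite_true, ite_false]
    norm_num
  have e01 : a 0 1 = b₁*c₂*c₃+b₂*c₁*c₃+b₃*c₁*c₂ := by
    rw [key, hexp]; simp only [coeff_add, coeff_C_mul, coeff_X_pow, coeff_X, coeff_C, coeff_one,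
      mul_ite, mul_one, mul_zero, ite_true, ite_false]
    norm_num
  have e11 : a 1 1 = b₁*(c₂+c₃)+b₂*(c₁+c₃)+b₃*(c₁+c₂) := by
    rw [key, hexp]; simp only [coeff_add, coeff_C_mul, coeff_X_pow, coeff_X, coeff_C, coeff_one,
      mul_ite, mul_one, mul_zero, ite_true, ite_false]
    norm_num
  have e21 : a 2 1 = b₁+b₂+b₃ := by
    rw [key, hexp]; simp only [coeff_add, coeff_C_mul, coeff_X_pow, coeff_X, coeff_C, coeff_one,
      mul_ite, mul_one, mul_zero, ite_true, ite_false]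
    norm_num
  have e02 : a 0 2 = b₁*b₂*c₃+b₁*b₃*c₂+b₂*b₃*c₁ := by
    rw [key, hexp]; simp only [coeff_add, coeff_C_mul, coeff_X_pow, coeff_X, coeff_C, coeff_one,
      mul_ite, mul_one, mul_zero, ite_true, ite_false]
    norm_num
  have e12 : a 1 2 = b₁*b₂+b₁*b₃+b₂*b₃ := by
    rw [key, hexp]; simp only [coeff_add, coeff_C_mul, coeff_X_pow, coeff_X, coeff_C, coeff_one,
      mul_ite, mul_one, mul_zero, ite_true, ite_false]
    norm_num
  have e22 : a 2 2 = 0 := by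
    rw [key, hexp]; simp only [coeff_add, coeff_C_mul, coeff_X_pow, coeff_X, coeff_C, coeff_one,
      mul_ite, mul_one, mul_zero, ite_true, ite_false]
    norm_num
  have hdet : (!![a 0 2, a 0 1, a 0 0; a 1 2, a 1 1, a 1 0; a 2 2, a 2 1, a 2 0]
        : Matrix (Fin 3) (Fin 3) ℝ).det
      = b₂ * b₃ ^ 2 * c₁ ^ 3 + b₂ ^ 2 * b₃ * c₁ ^ 3 + b₁ * b₃ ^ 2 * c₂ ^ 3
        + b₁ ^ 2 * b₃ * c₂ ^ 3 + b₁ * b₂ ^ 2 * c₃ ^ 3 + b₁ ^ 2 * b₂ * c₃ ^ 3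
        + 3 * b₁ * b₂ * b₃ * c₁ * c₂ * c₃ := by
    simp [Matrix.det_fin_three, e00, e10, e20, e01, e11, e21, e02, e12, e22]
    ring
  refine ⟨hdet, hdet ▸ ?_⟩
  positivity
end
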